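/- Let I = (𝔼, D, c, f) be a CMP instance whose objective f is of type sum, product, or bottleneck, and let E = {e_1,…,e_k} ⊆ 𝔼 be such that there exists an optimal solution S* of I with E ⊆ 𝔼 ∖ S*. Then l_b'(I,E) = inf{α ∈ ℝ : there exist an optimal solution S* of I and α⃗ = (α_1,…,α_k) with 0 ≤ α_l < maxdec(e_l) for all l and α = Σ_{l=1}^k α_l such that S* is not optimal for I_{−α⃗,E}}, i.e., the new reverse set lower tolerance coincides with the current reverse set lower tolerance of E. -/

import Mathlib

open scoped ENNReal BigOperators

/-- Objective type of a combinatorial minimization problem: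
sum, product, or bottleneck. -/
inductive ObjType where
  | sum : ObjType
  | prod : ObjType
  | bottleneck : ObjType
deriving DecidableEq

/-- The cost `f_c(S)` of a feasible solution `S` under cost function `c`:
the sum, the product, or the maximum (for nonempty `S`) of the element costs. -/
noncomputable def objCost {ι : Type*} (t : ObjType) (c : ι → ℝ) (S : Finset ι) : ℝ :=
  match t with
  | ObjType.sum => ∑ e ∈ S, c e
  | ObjType.prod => ∏ e ∈ S, c e
  | ObjType.bottleneck => if h : S.Nonempty then S.sup' h c else 0

/-- The optimal objective value `f(I)` of the instance with feasible set `D`. -/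
noncomputable def optVal {ι : Type*} (t : ObjType) (c : ι → ℝ) (D : Finset (Finset ι)) : ℝ :=
  if h : D.Nonempty then D.inf' h (objCost t c) else 0

/-- `S` is an optimal solution of the instance `(𝔼, D, c, f)`. -/
def isOpt {ι : Type*} (t : ObjType) (c : ι → ℝ) (D : Finset (Finset ι)) (S : Finset ι) : Prop :=
  S ∈ D ∧ objCost t c S = optVal t c D

/-- `0 ≤ a < maxdec(e)`, where `maxdec(e) = ∞` for sum/bottleneck objectives and
`maxdec(e) = c(e)` for the product objective. -/
def decOK {ι : Type*} (t : ObjType) (c : ι → ℝ) (e : ι) (a : ℝ) : Prop :=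
  0 ≤ a ∧ (t = ObjType.prod → a < c e)

/-- Extended single upper tolerance
`u'(I,e) = sup {α ≥ 0 : every optimal solution of I is optimal for I_{α,e}}` valued in `[0,∞]`. -/
noncomputable def uTol {ι : Type*} [DecidableEq ι] (t : ObjType) (c : ι → ℝ)
    (D : Finset (Finset ι)) (e : ι) : ℝ≥0∞ :=
  sSup (ENNReal.ofReal '' {a : ℝ | 0 ≤ a ∧
    ∀ S : Finset ι, isOpt t c D S →
      isOpt t (fun x => if x = e then c x + a else c x) D S})

/-- Extended regular set upper tolerance `u'(I,E)`, valued in `[0,∞]`. -/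
noncomputable def uTolSet {ι : Type*} [DecidableEq ι] (t : ObjType) (c : ι → ℝ)
    (D : Finset (Finset ι)) (E : Finset ι) : ℝ≥0∞ :=
  sSup (ENNReal.ofReal '' {a : ℝ |
    ∀ S : Finset ι, isOpt t c D S →
      ∃ α : ι → ℝ, (∀ x, 0 ≤ α x) ∧ (∀ x ∉ E, α x = 0) ∧
        a = ∑ x ∈ E, α x ∧ isOpt t (fun x => c x + α x) D S})

/-- Extended reverse set upper tolerance `u_b'(I,E)`, valued in `[0,∞]` (`inf ∅ = ∞`). -/
noncomputable def uTolSetRev {ι : Type*} [DecidableEq ι] (t : ObjType) (c : ι → ℝ)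
    (D : Finset (Finset ι)) (E : Finset ι) : ℝ≥0∞ :=
  sInf (ENNReal.ofReal '' {a : ℝ |
    ∃ S : Finset ι, isOpt t c D S ∧
      ∃ α : ι → ℝ, (∀ x, 0 ≤ α x) ∧ (∀ x ∉ E, α x = 0) ∧
        a = ∑ x ∈ E, α x ∧ ¬ isOpt t (fun x => c x + α x) D S})

/-- New single lower tolerance
`l'(I,e) = sup {α : 0 ≤ α < maxdec(e), f(I_{−α,e}) = f(I)}`, valued in `[0,∞]`. -/
noncomputable def lTol {ι : Type*} [DecidableEq ι] (t : ObjType) (c : ι → ℝ)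
    (D : Finset (Finset ι)) (e : ι) : ℝ≥0∞ :=
  sSup (ENNReal.ofReal '' {a : ℝ | decOK t c e a ∧
    optVal t (fun x => if x = e then c x - a else c x) D = optVal t c D})

/-- New regular set lower tolerance `l'(I,E)`, valued in `[0,∞]`. -/
noncomputable def lTolSet {ι : Type*} [DecidableEq ι] (t : ObjType) (c : ι → ℝ)
    (D : Finset (Finset ι)) (E : Finset ι) : ℝ≥0∞ :=
  sSup (ENNReal.ofReal '' {a : ℝ |
    ∃ α : ι → ℝ, (∀ x ∈ E, decOK t c x (α x)) ∧ (∀ x ∉ E, α x = 0) ∧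
      a = ∑ x ∈ E, α x ∧ optVal t (fun x => c x - α x) D = optVal t c D})

/-- New reverse set lower tolerance `l_b'(I,E)`, valued in `[0,∞]` (`inf ∅ = ∞`). -/
noncomputable def lTolSetRev {ι : Type*} [DecidableEq ι] (t : ObjType) (c : ι → ℝ)
    (D : Finset (Finset ι)) (E : Finset ι) : ℝ≥0∞ :=
  sInf (ENNReal.ofReal '' {a : ℝ |
    ∃ α : ι → ℝ, (∀ x ∈ E, decOK t c x (α x)) ∧ (∀ x ∉ E, α x = 0) ∧
      a = ∑ x ∈ E, α x ∧ optVal t (fun x => c x - α x) D < optVal t c D})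


/-! Lowering costs on `E` never raises the cost of any solution. If `f(I_{−α⃗,E}) < f(I)` then
an optimal solution `S*` avoiding `E` keeps its old cost `f(I)` and so is no longer optimal;
conversely, if some optimal `S*` stops being optimal, then `f(I_{−α⃗,E}) < f_{c−α⃗}(S*) ≤ f(I)`.
Hence the two sets whose infima are compared coincide. -/

section CostComparison

variable {ι : Type*} (t : ObjType) {c c' : ι → ℝ} {D : Finset (Finset ι)} {S : Finset ι}

lemma objCost_congr (h : ∀ x ∈ S, c' x = c x) : objCost t c' S = objCost t c S := by
  cases t with
  | sum => exact Finset.sum_congr rfl h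
  | prod => exact Finset.prod_congr rfl h
  | bottleneck =>
    simp only [objCost]
    split
    · exact Finset.sup'_congr _ rfl h
    · rfl

lemma objCost_mono (h : ∀ x ∈ S, c' x ≤ c x) (hp : t = ObjType.prod → ∀ x ∈ S, 0 ≤ c' x) :
    objCost t c' S ≤ objCost t c S := by
  cases t with
  | sum => exact Finset.sum_le_sum h
  | prod => exact Finset.prod_le_prod (hp rfl) h
  | bottleneck =>
    simp only [objCost]
    split
    · exact Finset.sup'_mono_fun h
    · rfl

lemma optVal_le_objCost (hS : S ∈ D) : optVal t c D ≤ objCost t c S := by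
  rw [optVal, dif_pos ⟨S, hS⟩]
  exact Finset.inf'_le _ hS

lemma not_isOpt_of_optVal_lt (hS : isOpt t c D S) (h : ∀ x ∈ S, c' x = c x)
    (hlt : optVal t c' D < optVal t c D) : ¬ isOpt t c' D S := fun hS' =>
  hlt.ne (by rw [← hS'.2, objCost_congr t h, hS.2])

lemma optVal_lt_of_not_isOpt (hS : isOpt t c D S) (h : ∀ x, c' x ≤ c x)
    (hp : t = ObjType.prod → ∀ x, 0 ≤ c' x) (hS' : ¬ isOpt t c' D S) :
    optVal t c' D < optVal t c D := by
  have hle : objCost t c' S ≤ optVal t c D :=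
    hS.2 ▸ objCost_mono t (fun x _ => h x) (fun ht x _ => hp ht x)
  refine lt_of_le_of_ne ((optVal_le_objCost t hS.1).trans hle) fun heq => hS' ⟨hS.1, ?_⟩
  exact le_antisymm (heq ▸ hle) (optVal_le_objCost t hS.1)

end CostComparison

section AdmissibleDecrease

variable {ι : Type*} {t : ObjType} {c α : ι → ℝ} {E : Finset ι}

lemma sub_le_self_of_decOK (h₁ : ∀ x ∈ E, decOK t c x (α x)) (h₂ : ∀ x ∉ E, α x = 0)
    (x : ι) : c x - α x ≤ c x := by
  by_cases hx : x ∈ E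
  · linarith [(h₁ x hx).1]
  · simp [h₂ x hx]

lemma sub_nonneg_of_decOK (hpos : t = ObjType.prod → ∀ x, 0 < c x)
    (h₁ : ∀ x ∈ E, decOK t c x (α x)) (h₂ : ∀ x ∉ E, α x = 0) :
    t = ObjType.prod → ∀ x, 0 ≤ c x - α x := by
  intro ht x
  by_cases hx : x ∈ E
  · linarith [(h₁ x hx).2 ht]
  · simpa [h₂ x hx] using (hpos ht x).le

end AdmissibleDecrease

theorem lrv_consistent_general {ι : Type*} [DecidableEq ι]
    (t : ObjType) (c : ι → ℝ) (D : Finset (Finset ι))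
    (hpos : t = ObjType.prod → ∀ x, 0 < c x)
    (E : Finset ι)
    (hout : ∃ S : Finset ι, isOpt t c D S ∧ ∀ x ∈ E, x ∉ S) :
    lTolSetRev t c D E =
      sInf (ENNReal.ofReal '' {a : ℝ |
        ∃ S : Finset ι, isOpt t c D S ∧
          ∃ α : ι → ℝ, (∀ x ∈ E, decOK t c x (α x)) ∧ (∀ x ∉ E, α x = 0) ∧
            a = ∑ x ∈ E, α x ∧ ¬ isOpt t (fun x => c x - α x) D S}) := by
  refine congrArg sInf (congrArg (Set.image ENNReal.ofReal) (Set.ext fun a => ?_))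
  constructor
  · rintro ⟨α, h₁, h₂, rfl, hlt⟩
    obtain ⟨S, hS, hdisj⟩ := hout
    refine ⟨S, hS, α, h₁, h₂, rfl, not_isOpt_of_optVal_lt t hS (fun x hx => ?_) hlt⟩
    simp [h₂ x fun hxE => hdisj x hxE hx]
  · rintro ⟨S, hS, α, h₁, h₂, rfl, hnot⟩
    exact ⟨α, h₁, h₂, rfl, optVal_lt_of_not_isOpt t hS (sub_le_self_of_decOK h₁ h₂)
      (sub_nonneg_of_decOK hpos h₁ h₂) hnot⟩

/-- Theorem 4(c) (consistency): if some optimal solution is disjoint from `E`,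
then the new reverse set lower tolerance `l_b'(I,E)` coincides with the current
reverse set lower tolerance. -/
theorem lrv_consistent {ι : Type*} [Fintype ι] [DecidableEq ι]
    (t : ObjType) (c : ι → ℝ) (D : Finset (Finset ι))
    (hD : D.Nonempty) (hSne : ∀ S ∈ D, S.Nonempty)
    (hpos : t = ObjType.prod → ∀ x, 0 < c x)
    (E : Finset ι) (hE : E.Nonempty)
    (hout : ∃ S : Finset ι, isOpt t c D S ∧ ∀ x ∈ E, x ∉ S) :
    lTolSetRev t c D E =
      sInf (ENNReal.ofReal '' {a : ℝ |
        ∃ S : Finset ι, isOpt t c D S ∧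
          ∃ α : ι → ℝ, (∀ x ∈ E, decOK t c x (α x)) ∧ (∀ x ∉ E, α x = 0) ∧
            a = ∑ x ∈ E, α x ∧ ¬ isOpt t (fun x => c x - α x) D S}) :=
  lrv_consistent_general t c D hpos E hout
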